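/- Every partial conjugate of a simple k-power is k-power-free (k ≥ 2). -/

import Mathlib

/-- `p^k`: the word `p` concatenated `k` times. -/
def listPow {α : Type*} (p : List α) (k : ℕ) : List α := (List.replicate k p).flatten

/-- A `k`-power is a nonempty word of the form `p^k`. -/
def IsKPower {α : Type*} (k : ℕ) (w : List α) : Prop := ∃ p : List α, p ≠ [] ∧ w = listPow p k

/-- A word is `k`-power-free if none of its factors is a `k`-power. -/
def KPowerFree {α : Type*} (k : ℕ) (w : List α) : Prop :=
  ∀ y : List α, y <:+: w → ¬ IsKPower k y

/-- A simple `k`-power: a `k`-power none of whose proper factors is a `k`-power. -/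
def SimpleKPower {α : Type*} (k : ℕ) (w : List α) : Prop :=
  IsKPower k w ∧ ∀ y : List α, y <:+: w → y ≠ w → ¬ IsKPower k y

/-- The `i`-th partial conjugate: shift left cyclically by `i`, then drop the last symbol. -/
def cyc {α : Type*} (i : ℕ) (w : List α) : List α := (w.rotate i).dropLast

/-!
An occurrence of `q^k` in a partial conjugate of `w = p^k` is a window of length
`k|q| ≤ k|p| - 1` of the periodic word `p^ω` with period `|q|`; windows of `p^ω` are encoded as
`fun j => p[(a + j) % p.length]?`. Every window of length at most `(k-1)|p| + 1` already occurs
in `p^k`, so a short occurrence yields a proper `k`-power factor of `w`. For a long one, `|q|` and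
the global period `|p|` combine into the period `|p| - |q|` of the window shifted by `|q|`, and `k`
repetitions of it fit in length `k(|p| - |q|) ≤ |p| - 2`, which is short.
-/

open Function

section

variable {α β : Type*}

def PeriodicBelow (u : ℕ → β) (e L : ℕ) : Prop :=
  ∀ j, j + e < L → u (j + e) = u j

namespace PeriodicBelow

variable {u : ℕ → β} {e L : ℕ}

theorem mono (h : PeriodicBelow u e L) {L' : ℕ} (hL : L' ≤ L) : PeriodicBelow u e L' :=
  fun j hj => h j (by omega)

theorem apply_mod (h : PeriodicBelow u e L) {j : ℕ} (hj : j < L) : u j = u (j % e) := by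
  rcases Nat.eq_zero_or_pos e with rfl | he
  · rw [Nat.mod_zero]
  induction j using Nat.strong_induction_on with
  | _ j ih =>
    rcases lt_or_ge j e with hje | hje
    · rw [Nat.mod_eq_of_lt hje]
    · calc u j = u (j - e + e) := by rw [Nat.sub_add_cancel hje]
        _ = u (j - e) := h _ (by omega)
        _ = u ((j - e) % e) := ih _ (by omega) (by omega)
        _ = u (j % e) := by rw [← Nat.mod_eq_sub_mod hje]

theorem sub_of_periodic {m n : ℕ} (h : PeriodicBelow u m L) (hu : Periodic u n) (hmn : m ≤ n) :
    PeriodicBelow (fun j => u (m + j)) (n - m) (L - m + (n - m)) := by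
  intro j hj
  calc u (m + (j + (n - m))) = u (j + n) := by congr 1; omega
    _ = u j := hu j
    _ = u (j + m) := (h j (by omega)).symm
    _ = u (m + j) := by rw [Nat.add_comm]

end PeriodicBelow

theorem listPow_succ (p : List α) (k : ℕ) : listPow p (k + 1) = p ++ listPow p k := by
  simp [listPow, List.replicate_succ]

theorem length_listPow (p : List α) (k : ℕ) : (listPow p k).length = k * p.length := by
  induction k with
  | zero => simp [listPow]
  | succ k ih => rw [listPow_succ, List.length_append, ih, Nat.succ_mul, Nat.add_comm]

theorem getElem?_listPow (p : List α) (k t : ℕ) :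
    (listPow p k)[t]? = if t < k * p.length then p[t % p.length]? else none := by
  induction k generalizing t with
  | zero => simp [listPow]
  | succ k ih =>
    rw [listPow_succ, List.getElem?_append, ih, Nat.succ_mul]
    by_cases ht : t < p.length
    · rw [if_pos ht, if_pos (by omega), Nat.mod_eq_of_lt ht]
    · rw [if_neg ht, ← Nat.mod_eq_sub_mod (not_lt.mp ht)]
      exact if_congr (by omega) rfl rfl

theorem periodicBelow_listPow (p : List α) (k : ℕ) :
    PeriodicBelow (fun j => (listPow p k)[j]?) p.length (k * p.length) := by
  intro j hj
  simp only [getElem?_listPow, if_pos hj, if_pos (by omega : j < k * p.length), Nat.add_mod_right]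

theorem eq_listPow_take_of_periodicBelow {y : List α} {e k : ℕ}
    (hy : PeriodicBelow (fun j => y[j]?) e y.length) (hlen : y.length = k * e) :
    y = listPow (y.take e) k := by
  rcases Nat.eq_zero_or_pos k with rfl | hk
  · simpa [listPow] using hlen
  have hmin : min e y.length = e := min_eq_left (hlen ▸ Nat.le_mul_of_pos_left e hk)
  ext1 t
  rw [getElem?_listPow, List.length_take, hmin, ← hlen]
  split_ifs with ht
  · have he : 0 < e := Nat.pos_of_ne_zero fun he => by rw [he, Nat.mul_zero] at hlen; omega
    rw [hy.apply_mod ht, List.getElem?_take_of_lt (Nat.mod_lt _ he)]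
  · exact List.getElem?_eq_none (by omega)

theorem getElem?_cyc (w : List α) (i : ℕ) {t : ℕ} (ht : t < w.length - 1) :
    (cyc i w)[t]? = w[(t + i) % w.length]? := by
  rw [cyc, List.getElem?_dropLast, List.length_rotate, if_pos ht, List.getElem?_rotate (by omega)]

theorem length_cyc (w : List α) (i : ℕ) : (cyc i w).length = w.length - 1 := by
  simp [cyc]

theorem exists_infix_listPow_of_window {p : List α} (hp : p ≠ []) {k : ℕ} (hk : 0 < k) (a : ℕ)
    {L : ℕ} (hL : L ≤ (k - 1) * p.length + 1) :
    ∃ y, y <:+: listPow p k ∧ y.length = L ∧ ∀ j < L, y[j]? = p[(a + j) % p.length]? := by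
  have hn : a % p.length < p.length := Nat.mod_lt _ (List.length_pos_iff.mpr hp)
  have hfit : a % p.length + L ≤ k * p.length := by
    rw [Nat.sub_one_mul] at hL
    have : p.length ≤ k * p.length := Nat.le_mul_of_pos_left _ hk
    omega
  refine ⟨((listPow p k).drop (a % p.length)).take L,
    (List.take_prefix _ _).isInfix.trans (List.drop_suffix _ _).isInfix, ?_, fun j hj => ?_⟩
  · simp only [List.length_take, List.length_drop, length_listPow]
    omega
  · rw [List.getElem?_take_of_lt hj, List.getElem?_drop, getElem?_listPow, if_pos (by omega),
      Nat.mod_add_mod]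

theorem exists_kPower_infix_of_periodicBelow {p : List α} (hp : p ≠ []) {k : ℕ} (hk : 0 < k)
    {a e : ℕ} (he : 0 < e) (hL : k * e ≤ (k - 1) * p.length + 1)
    (hper : PeriodicBelow (fun j => p[(a + j) % p.length]?) e (k * e)) :
    ∃ y, y <:+: listPow p k ∧ y.length = k * e ∧ IsKPower k y := by
  obtain ⟨y, hy, hlen, hwin⟩ := exists_infix_listPow_of_window hp hk a hL
  have hyper : PeriodicBelow (fun j => y[j]?) e y.length := by
    intro j hj
    rw [hlen] at hj
    dsimp only
    rw [hwin _ hj, hwin _ (by omega)]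
    exact hper j hj
  have hbase : y.take e ≠ [] := by
    rw [← List.length_pos_iff, List.length_take, hlen]
    exact lt_min he (Nat.mul_pos hk he)
  exact ⟨y, hy, hlen, y.take e, hbase, eq_listPow_take_of_periodicBelow hyper hlen⟩

theorem exists_periodicBelow_of_infix_cyc {p q : List α} {k i : ℕ}
    (hinf : listPow q k <:+: cyc i (listPow p k)) :
    k * q.length ≤ k * p.length - 1 ∧
      ∃ a, PeriodicBelow (fun j => p[(a + j) % p.length]?) q.length (k * q.length) := by
  obtain ⟨s, hfit, hocc⟩ := List.infix_iff_getElem?.mp hinf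
  rw [length_cyc, length_listPow, length_listPow] at hfit
  refine ⟨by omega, i + s, ?_⟩
  have hread : ∀ j < k * q.length, p[(i + s + j) % p.length]? = (listPow q k)[j]? := by
    intro j hj
    have hj' : j < (listPow q k).length := by rwa [length_listPow]
    rw [List.getElem?_eq_getElem hj', ← hocc j hj',
      getElem?_cyc _ _ (by rw [length_listPow]; omega), length_listPow, getElem?_listPow,
      if_pos (Nat.mod_lt _ (by omega)), Nat.mod_mod_of_dvd _ (Dvd.intro_left _ rfl)]
    congr 2
    omega
  intro j hj
  dsimp only
  rw [hread _ hj, hread _ (by omega)]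
  exact periodicBelow_listPow q k j hj

theorem SimpleKPower.not_periodicBelow {p : List α} {k : ℕ}
    (hsimple : SimpleKPower k (listPow p k)) (hp : p ≠ []) (hk : 0 < k) {a e : ℕ} (he : 0 < e)
    (hen : e < p.length) (hL : k * e ≤ (k - 1) * p.length + 1) :
    ¬ PeriodicBelow (fun j => p[(a + j) % p.length]?) e (k * e) := by
  intro hper
  obtain ⟨y, hy, hylen, hyk⟩ := exists_kPower_infix_of_periodicBelow hp hk he hL hper
  refine hsimple.2 y hy (fun h => ?_) hyk
  rw [h, length_listPow] at hylen
  exact hen.ne (Nat.eq_of_mul_eq_mul_left hk hylen).symm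

theorem Function.Periodic.exists_short_periodicBelow {u : ℕ → β} {n m k : ℕ}
    (hu : Periodic u n) (hk : 2 ≤ k) (hm : 0 < m) (hlen : k * m ≤ k * n - 1)
    (h : PeriodicBelow u m (k * m)) :
    ∃ a e, 0 < e ∧ e < n ∧ k * e ≤ (k - 1) * n + 1 ∧
      PeriodicBelow (fun j => u (a + j)) e (k * e) := by
  have hmn : m < n := by
    by_contra! hnm
    have := Nat.mul_le_mul_left k hnm
    have := Nat.mul_pos (by omega : 0 < k) hm
    omega
  by_cases hshort : k * m ≤ (k - 1) * n + 1
  · exact ⟨0, m, hm, hmn, hshort, by simpa only [Nat.zero_add] using h⟩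
  obtain ⟨c, rfl⟩ : ∃ c, k = c + 1 := ⟨k - 1, by omega⟩
  obtain ⟨d, rfl⟩ : ∃ d, n = m + d := ⟨n - m, by omega⟩
  rw [Nat.add_sub_cancel] at hshort ⊢
  have hdm : d ≤ m := by nlinarith
  have hwin := h.sub_of_periodic hu (Nat.le_add_right m d)
  rw [Nat.add_sub_cancel_left, Nat.add_one_mul, Nat.add_sub_cancel] at hwin
  refine ⟨m, d, by omega, by omega, by nlinarith, hwin.mono ?_⟩
  have := Nat.mul_le_mul_left c hdm
  rw [Nat.add_one_mul]
  omega

end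

/-- Every partial conjugate of a simple `k`-power is `k`-power-free. -/
theorem cyc_kPowerFree {α : Type*} (k : ℕ) (hk : 2 ≤ k) (w : List α)
    (hw : SimpleKPower k w) : ∀ i : ℕ, KPowerFree k (cyc i w) := by
  obtain ⟨p, hp, rfl⟩ := hw.1
  rintro i _ hinf ⟨q, hq, rfl⟩
  obtain ⟨hlen, a, hper⟩ := exists_periodicBelow_of_infix_cyc hinf
  have hperiodic : Periodic (fun j => p[(a + j) % p.length]?) p.length := fun j => by
    simp only [← Nat.add_assoc, Nat.add_mod_right]
  obtain ⟨b, e, he, hen, hL, hwin⟩ :=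
    hperiodic.exists_short_periodicBelow hk (List.length_pos_iff.mpr hq) hlen hper
  exact hw.not_periodicBelow (a := a + b) hp (by omega) he hen hL
    (by simpa only [Nat.add_assoc] using hwin)
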